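/- Let α ∈ ℝ and let φ be a non-negative locally integrable function satisfying: there are constants C₁,C₂,C₃,C₄>0 with C₁ ≤ φ(s)/s^{2α} ≤ C₂ for all s ≥ 1 and C₃ ≤ φ(s)/s^{2α+1} ≤ C₄ for all 0<s<1. Then there exist constants c,C>0 (depending only on C₁,C₂,C₃,C₄) such that for every non-negative measurable function h on (0,∞) and every x>0, c·(Ch)(x) ≤ (H_{α,φ}h)(x) ≤ C·(Ch)(x), where C is the Calderón (Hardy–Littlewood–Pólya) operator (Ch)(x) = (1/x)·∫₀ˣ h(t)dt + ∫ₓ^∞ (h(t)/t)dt. -/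

import Mathlib

open MeasureTheory Set
open scoped ENNReal

/-- The Dunkl–Hausdorff operator acting on `ℝ≥0∞`-valued functions. -/
noncomputable def dhL (α : ℝ) (φ : ℝ → ℝ) (f : ℝ → ℝ≥0∞) (x : ℝ) : ℝ≥0∞ :=
  ∫⁻ t in Ioi (0:ℝ), ENNReal.ofReal (φ t / t ^ (2*α+2)) * f (x/t)

/-- The Calderón (Hardy–Littlewood–Pólya) operator. -/
noncomputable def calderonL (h : ℝ → ℝ≥0∞) (x : ℝ) : ℝ≥0∞ :=
  ENNReal.ofReal (1/x) * (∫⁻ t in Ioo (0:ℝ) x, h t) + ∫⁻ t in Ioi x, h t / ENNReal.ofReal t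

/-!
Split `(0, ∞)` at `1`. On `[1, ∞)` the kernel `φ t / t ^ (2α+2)` is comparable to `t⁻²`, and
the substitution `u = x / t` turns `∫_{[1,∞)} t⁻² h (x/t) dt` into the Hardy average
`x⁻¹ ∫₀ˣ h`; on `(0, 1)` it is comparable to `t⁻¹`, and the same substitution turns
`∫₀¹ t⁻¹ h (x/t) dt` into the conjugate Hardy operator `∫ₓ^∞ h(u)/u du`.
-/

section Comparison

variable {X : Type*} [MeasurableSpace X] {μ : Measure X} {s : Set X} {k w : X → ℝ}

theorem ofReal_mul_setLIntegral_le {a : ℝ} (hs : MeasurableSet s) (hw : ∀ t ∈ s, 0 ≤ w t)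
    (hkw : ∀ t ∈ s, a * w t ≤ k t) (f : X → ℝ≥0∞) :
    ENNReal.ofReal a * ∫⁻ t in s, ENNReal.ofReal (w t) * f t ∂μ
      ≤ ∫⁻ t in s, ENNReal.ofReal (k t) * f t ∂μ :=
  calc ENNReal.ofReal a * ∫⁻ t in s, ENNReal.ofReal (w t) * f t ∂μ
      ≤ ∫⁻ t in s, ENNReal.ofReal a * (ENNReal.ofReal (w t) * f t) ∂μ :=
        lintegral_const_mul_le _ _
    _ ≤ ∫⁻ t in s, ENNReal.ofReal (k t) * f t ∂μ := by
        refine setLIntegral_mono' hs fun t ht => ?_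
        rw [← mul_assoc, ← ENNReal.ofReal_mul' (hw t ht)]
        gcongr
        exact hkw t ht

theorem setLIntegral_le_ofReal_mul {b : ℝ} (hs : MeasurableSet s) (hw : ∀ t ∈ s, 0 ≤ w t)
    (hkw : ∀ t ∈ s, k t ≤ b * w t) (f : X → ℝ≥0∞) :
    ∫⁻ t in s, ENNReal.ofReal (k t) * f t ∂μ
      ≤ ENNReal.ofReal b * ∫⁻ t in s, ENNReal.ofReal (w t) * f t ∂μ :=
  calc ∫⁻ t in s, ENNReal.ofReal (k t) * f t ∂μ
      ≤ ∫⁻ t in s, ENNReal.ofReal b * (ENNReal.ofReal (w t) * f t) ∂μ := by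
        refine setLIntegral_mono' hs fun t ht => ?_
        rw [← mul_assoc, ← ENNReal.ofReal_mul' (hw t ht)]
        gcongr
        exact hkw t ht
    _ = ENNReal.ofReal b * ∫⁻ t in s, ENNReal.ofReal (w t) * f t ∂μ :=
        lintegral_const_mul' _ _ ENNReal.ofReal_ne_top

end Comparison

section Substitution

variable {x : ℝ}

theorem setLIntegral_image_const_div (hx : 0 < x) {s : Set ℝ} (hs : MeasurableSet s)
    (hs0 : s ⊆ Ioi 0) (g : ℝ → ℝ≥0∞) :
    ∫⁻ u in (x / ·) '' s, g u = ∫⁻ t in s, ENNReal.ofReal (x / t ^ 2) * g (x / t) := by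
  have hderiv : ∀ t ∈ s, HasDerivWithinAt (x / ·) (-(x / t ^ 2)) s t := fun t ht => by
    have h : HasDerivAt (x / ·) (-(x / t ^ 2)) t := by
      simpa only [div_eq_mul_inv, mul_neg] using (hasDerivAt_inv (hs0 ht).ne').const_mul x
    exact h.hasDerivWithinAt
  have hinj : InjOn (x / ·) s := fun a ha b hb hab => by
    rw [div_eq_div_iff (hs0 ha).ne' (hs0 hb).ne'] at hab
    exact (mul_left_cancel₀ hx.ne' hab).symm
  rw [lintegral_image_eq_lintegral_abs_deriv_mul hs hderiv hinj]
  refine setLIntegral_congr_fun hs fun t ht => ?_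
  have : 0 < t := hs0 ht
  rw [abs_neg, abs_of_pos (by positivity)]

theorem image_const_div_Ici_one (hx : 0 < x) : (x / ·) '' Ici 1 = Ioc 0 x := by
  ext u
  constructor
  · rintro ⟨t, ht, rfl⟩
    have ht0 : 0 < t := zero_lt_one.trans_le ht
    exact ⟨by positivity, div_le_self hx.le ht⟩
  · rintro ⟨hu0, hux⟩
    exact ⟨x / u, (one_le_div hu0).mpr hux, by field_simp⟩

theorem image_const_div_Ioo_zero_one (hx : 0 < x) : (x / ·) '' Ioo 0 1 = Ioi x := by
  ext u
  constructor
  · rintro ⟨t, ⟨ht0, ht1⟩, rfl⟩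
    exact (lt_div_iff₀ ht0).mpr (by nlinarith)
  · intro hu
    have hu0 : 0 < u := hx.trans hu
    exact ⟨x / u, ⟨by positivity, (div_lt_one hu0).mpr hu⟩, by field_simp⟩

theorem setLIntegral_Ici_one_inv_sq_mul_comp_const_div (hx : 0 < x) (h : ℝ → ℝ≥0∞) :
    ∫⁻ t in Ici 1, ENNReal.ofReal (t ^ 2)⁻¹ * h (x / t)
      = ENNReal.ofReal (1 / x) * ∫⁻ u in Ioo 0 x, h u := by
  have hs0 : Ici (1 : ℝ) ⊆ Ioi 0 := Ici_subset_Ioi.mpr zero_lt_one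
  rw [setLIntegral_congr Ioo_ae_eq_Ioc, ← image_const_div_Ici_one hx,
    setLIntegral_image_const_div hx measurableSet_Ici hs0,
    ← lintegral_const_mul' _ _ ENNReal.ofReal_ne_top]
  refine setLIntegral_congr_fun measurableSet_Ici fun t ht => ?_
  have : 0 < t := hs0 ht
  rw [← mul_assoc, ← ENNReal.ofReal_mul (by positivity)]
  field_simp

theorem setLIntegral_Ioo_zero_one_inv_mul_comp_const_div (hx : 0 < x) (h : ℝ → ℝ≥0∞) :
    ∫⁻ t in Ioo 0 1, ENNReal.ofReal t⁻¹ * h (x / t) = ∫⁻ u in Ioi x, h u / ENNReal.ofReal u := by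
  rw [← image_const_div_Ioo_zero_one hx,
    setLIntegral_image_const_div hx measurableSet_Ioo fun t ht => ht.1]
  refine setLIntegral_congr_fun measurableSet_Ioo fun t ht => ?_
  have := ht.1
  rw [ENNReal.div_eq_inv_mul, ← ENNReal.ofReal_inv_of_pos (by positivity), ← mul_assoc,
    ← ENNReal.ofReal_mul (by positivity)]
  field_simp

end Substitution

theorem dhL_eq_add (α : ℝ) (φ : ℝ → ℝ) (h : ℝ → ℝ≥0∞) (x : ℝ) :
    dhL α φ h x = (∫⁻ t in Ioo 0 1, ENNReal.ofReal (φ t / t ^ (2*α+2)) * h (x/t))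
      + ∫⁻ t in Ici 1, ENNReal.ofReal (φ t / t ^ (2*α+2)) * h (x/t) := by
  rw [dhL, ← Ioo_union_Ici_eq_Ioi zero_lt_one,
    lintegral_union measurableSet_Ici ((Iio_disjoint_Ici le_rfl).mono_left Ioo_subset_Iio_self)]

theorem div_rpow_add_two_eq_mul_inv {t : ℝ} (ht : 0 < t) (a β : ℝ) :
    a / t ^ (β + 2) = a / t ^ (β + 1) * t⁻¹ := by
  rw [show β + 2 = β + 1 + 1 by ring, Real.rpow_add_one ht.ne']
  ring

theorem div_rpow_add_two_eq_mul_inv_sq {t : ℝ} (ht : 0 < t) (a β : ℝ) :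
    a / t ^ (β + 2) = a / t ^ β * (t ^ 2)⁻¹ := by
  rw [Real.rpow_add ht, Real.rpow_two]
  ring

theorem ofReal_mul_add_le_dhL {α a b x : ℝ} {φ : ℝ → ℝ} (hx : 0 < x)
    (ha : ∀ s : ℝ, 1 ≤ s → a ≤ φ s / s ^ (2*α))
    (hb : ∀ s : ℝ, 0 < s → s < 1 → b ≤ φ s / s ^ (2*α+1)) (h : ℝ → ℝ≥0∞) :
    ENNReal.ofReal a * (ENNReal.ofReal (1/x) * ∫⁻ t in Ioo 0 x, h t)
      + ENNReal.ofReal b * ∫⁻ t in Ioi x, h t / ENNReal.ofReal t ≤ dhL α φ h x := by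
  rw [dhL_eq_add, add_comm, ← setLIntegral_Ici_one_inv_sq_mul_comp_const_div hx,
    ← setLIntegral_Ioo_zero_one_inv_mul_comp_const_div hx]
  gcongr ?_ + ?_
  · refine ofReal_mul_setLIntegral_le measurableSet_Ioo (fun t ht => inv_nonneg.2 ht.1.le)
      (fun t ht => ?_) _
    rw [div_rpow_add_two_eq_mul_inv ht.1]
    exact mul_le_mul_of_nonneg_right (hb t ht.1 ht.2) (inv_nonneg.2 ht.1.le)
  · refine ofReal_mul_setLIntegral_le measurableSet_Ici (fun t _ => by positivity)
      (fun t ht => ?_) _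
    rw [div_rpow_add_two_eq_mul_inv_sq (zero_lt_one.trans_le ht)]
    exact mul_le_mul_of_nonneg_right (ha t ht) (by positivity)

theorem dhL_le_ofReal_mul_add {α a b x : ℝ} {φ : ℝ → ℝ} (hx : 0 < x)
    (ha : ∀ s : ℝ, 1 ≤ s → φ s / s ^ (2*α) ≤ a)
    (hb : ∀ s : ℝ, 0 < s → s < 1 → φ s / s ^ (2*α+1) ≤ b) (h : ℝ → ℝ≥0∞) :
    dhL α φ h x ≤ ENNReal.ofReal a * (ENNReal.ofReal (1/x) * ∫⁻ t in Ioo 0 x, h t)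
      + ENNReal.ofReal b * ∫⁻ t in Ioi x, h t / ENNReal.ofReal t := by
  rw [dhL_eq_add, add_comm, ← setLIntegral_Ici_one_inv_sq_mul_comp_const_div hx,
    ← setLIntegral_Ioo_zero_one_inv_mul_comp_const_div hx]
  gcongr ?_ + ?_
  · refine setLIntegral_le_ofReal_mul measurableSet_Ici (fun t _ => by positivity)
      (fun t ht => ?_) _
    rw [div_rpow_add_two_eq_mul_inv_sq (zero_lt_one.trans_le ht)]
    exact mul_le_mul_of_nonneg_right (ha t ht) (by positivity)
  · refine setLIntegral_le_ofReal_mul measurableSet_Ioo (fun t ht => inv_nonneg.2 ht.1.le)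
      (fun t ht => ?_) _
    rw [div_rpow_add_two_eq_mul_inv ht.1]
    exact mul_le_mul_of_nonneg_right (hb t ht.1 ht.2) (inv_nonneg.2 ht.1.le)

theorem dunklH_equiv_calderon_general (α C₁ C₂ C₃ C₄ : ℝ)
    (hC₁ : 0 < C₁) (hC₂ : 0 < C₂) (hC₃ : 0 < C₃) :
    ∃ c C : ℝ, 0 < c ∧ 0 < C ∧
      ∀ φ : ℝ → ℝ, (∀ s, 0 ≤ φ s) → LocallyIntegrableOn φ (Ioi 0) →
        (∀ s : ℝ, 1 ≤ s → C₁ ≤ φ s / s ^ (2*α) ∧ φ s / s ^ (2*α) ≤ C₂) →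
        (∀ s : ℝ, 0 < s → s < 1 → C₃ ≤ φ s / s ^ (2*α+1) ∧ φ s / s ^ (2*α+1) ≤ C₄) →
        ∀ h : ℝ → ℝ≥0∞, Measurable h → ∀ x : ℝ, 0 < x →
          ENNReal.ofReal c * calderonL h x ≤ dhL α φ h x ∧
          dhL α φ h x ≤ ENNReal.ofReal C * calderonL h x := by
  refine ⟨min C₁ C₃, max C₂ C₄, lt_min hC₁ hC₃, hC₂.trans_le (le_max_left _ _),
    fun φ _ _ hge hlt h _ x hx => ⟨?_, ?_⟩⟩
  · refine le_trans ?_ (ofReal_mul_add_le_dhL hx (fun s hs => (hge s hs).1)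
      (fun s hs0 hs1 => (hlt s hs0 hs1).1) h)
    rw [calderonL, mul_add]
    gcongr
    exacts [min_le_left _ _, min_le_right _ _]
  · refine (dhL_le_ofReal_mul_add hx (fun s hs => (hge s hs).2)
      (fun s hs0 hs1 => (hlt s hs0 hs1).2) h).trans ?_
    rw [calderonL, mul_add]
    gcongr
    exacts [le_max_left _ _, le_max_right _ _]

theorem dunklH_equiv_calderon (α C₁ C₂ C₃ C₄ : ℝ)
    (hC₁ : 0 < C₁) (hC₂ : 0 < C₂) (hC₃ : 0 < C₃) (hC₄ : 0 < C₄) :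
    ∃ c C : ℝ, 0 < c ∧ 0 < C ∧
      ∀ φ : ℝ → ℝ, (∀ s, 0 ≤ φ s) → LocallyIntegrableOn φ (Ioi 0) →
        (∀ s : ℝ, 1 ≤ s → C₁ ≤ φ s / s ^ (2*α) ∧ φ s / s ^ (2*α) ≤ C₂) →
        (∀ s : ℝ, 0 < s → s < 1 → C₃ ≤ φ s / s ^ (2*α+1) ∧ φ s / s ^ (2*α+1) ≤ C₄) →
        ∀ h : ℝ → ℝ≥0∞, Measurable h → ∀ x : ℝ, 0 < x →
          ENNReal.ofReal c * calderonL h x ≤ dhL α φ h x ∧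
          dhL α φ h x ≤ ENNReal.ofReal C * calderonL h x :=
  dunklH_equiv_calderon_general α C₁ C₂ C₃ C₄ hC₁ hC₂ hC₃
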